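/- arXiv:0710.0949 — 2 statements merged into one kernel-verified Lean document; each statement's English description precedes it below -/
import Mathlib

section
/- Let r ≥ 1, let λ and γ be complex numbers, and let β be a nonzero complex number. Then the pair of (2r+2)×(2r) complex matrices (F_r ⊕ F_{r+1} ⊕ [1], (K_r ⊕ K_{r+1} ⊕ [λ]) + β·E_{1,2r} + γ·E_{r+1,2r}), where [1] and [λ] are 1×1 blocks, is equivalent to the pair (F_{r+1} ⊕ F_{r+1}, K_{r+1} ⊕ K_{r+1}). -/
/-!
Call the two matrices of the first pair `A₁, A₂`, and write `c_k, d_k, e` for the standard basis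
vectors of `ℂ^{2r}` that `A₁` sends to the standard basis vectors `u_k, x_k, z` of `ℂ^{2r+2}` in
the blocks `F_r`, `F_{r+1}`, `[1]`. The vectors `w_0 = z`, `w_{k+1} = λ w_k + β u_k + γ x_k` and
`v_0 = e`, `v_{k+1} = λ v_k + β c_k + γ d_k` satisfy `A₁ v_k = w_k` and `A₂ v_k = w_{k+1}` for
`k < r`, so `v_0, …, v_{r-1}` and `w_0, …, w_r` form a new `F_{r+1}`, `K_{r+1}` chain next to the
untouched `x`-chain. As `β ≠ 0` the recursions can be solved for `u_k` and `c_k`, so these vectors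
together with the `x`'s and `d`'s are bases, and the matrices with these columns intertwine the
two pairs.
-/

open Matrix

noncomputable section

/-- The `M × N` complex matrix obtained by placing the matrix `A` with its top-left corner
at (1-based) position `(ri+1, ci+1)` (i.e. with row offset `ri` and column offset `ci`),
with all other entries zero.  Block-diagonal direct sums of (possibly rectangular) matrices
are expressed as sums of such placements along the diagonal. -/
def place {M N m n : ℕ} (ri ci : ℕ) (A : Matrix (Fin m) (Fin n) ℂ) :
    Matrix (Fin M) (Fin N) ℂ := fun i j =>
  if hi : ri ≤ (i : ℕ) ∧ (i : ℕ) < ri + m then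
    if hj : ci ≤ (j : ℕ) ∧ (j : ℕ) < ci + n then
      A ⟨(i : ℕ) - ri, by omega⟩ ⟨(j : ℕ) - ci, by omega⟩
    else 0
  else 0

/-- The `r × (r-1)` matrix `F_r` with ones on the main diagonal and zeros elsewhere. -/
def MatF (r : ℕ) : Matrix (Fin r) (Fin (r - 1)) ℂ :=
  fun i j => if (i : ℕ) = (j : ℕ) then 1 else 0

/-- The `r × (r-1)` matrix `K_r` with ones on the subdiagonal and zeros elsewhere. -/
def MatK (r : ℕ) : Matrix (Fin r) (Fin (r - 1)) ℂ :=
  fun i j => if (i : ℕ) = (j : ℕ) + 1 then 1 else 0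

/-- The matrix unit `E_{a,b}` (1-based indices): entry `(a,b)` is `1`, all others `0`. -/
def Estd {M N : ℕ} (a b : ℕ) : Matrix (Fin M) (Fin N) ℂ :=
  fun i j => if (i : ℕ) + 1 = a ∧ (j : ℕ) + 1 = b then 1 else 0

/-- Two pairs `(A₁, A₂)` and `(B₁, B₂)` of `m × n` complex matrices are equivalent if
`B₁ = R * A₁ * S` and `B₂ = R * A₂ * S` for some invertible `R`, `S`. -/
def PairEquiv {m n : ℕ} (A₁ A₂ B₁ B₂ : Matrix (Fin m) (Fin n) ℂ) : Prop :=
  ∃ (R : Matrix (Fin m) (Fin m) ℂ) (S : Matrix (Fin n) (Fin n) ℂ),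
    IsUnit R ∧ IsUnit S ∧ B₁ = R * A₁ * S ∧ B₂ = R * A₂ * S

-- Zero when `n ≤ i`, so that indices need no bound proofs.
def unitVec (n i : ℕ) : Fin n → ℂ := fun a => if (a : ℕ) = i then 1 else 0

lemma unitVec_eq_single {n : ℕ} (j : Fin n) : unitVec n j = Pi.single j 1 := by
  ext a
  simp [unitVec, Pi.single_apply, Fin.ext_iff]

lemma mulVec_unitVec {m n : ℕ} (M : Matrix (Fin m) (Fin n) ℂ) (j : Fin n) :
    M *ᵥ unitVec n j = fun i => M i j := by
  rw [unitVec_eq_single, mulVec_single_one]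
  rfl

lemma isUnit_of_unitVec_mem_range {n : ℕ} (M : Matrix (Fin n) (Fin n) ℂ)
    (h : ∀ i < n, unitVec n i ∈ LinearMap.range M.mulVecLin) : IsUnit M := by
  rw [← mulVec_surjective_iff_isUnit, ← coe_mulVecLin, ← LinearMap.range_eq_top, eq_top_iff,
    ← (Pi.basisFun ℂ (Fin n)).span_eq, Submodule.span_le]
  rintro _ ⟨i, rfl⟩
  simpa [unitVec_eq_single] using h i i.isLt

lemma PairEquiv.of_mul_eq {m n : ℕ} {A₁ A₂ B₁ B₂ : Matrix (Fin m) (Fin n) ℂ}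
    {G : Matrix (Fin m) (Fin m) ℂ} {S : Matrix (Fin n) (Fin n) ℂ} (hG : IsUnit G) (hS : IsUnit S)
    (h₁ : A₁ * S = G * B₁) (h₂ : A₂ * S = G * B₂) : PairEquiv A₁ A₂ B₁ B₂ := by
  obtain ⟨G, rfl⟩ := hG
  refine ⟨↑G⁻¹, S, G⁻¹.isUnit, hS, ?_, ?_⟩
  · rw [Matrix.mul_assoc, h₁, ← Matrix.mul_assoc, G.inv_mul, Matrix.one_mul]
  · rw [Matrix.mul_assoc, h₂, ← Matrix.mul_assoc, G.inv_mul, Matrix.one_mul]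

section Place

variable {M N : ℕ}

lemma place_MatF_mulVec_unitVec (ri ci m j : ℕ) (hj : j < N) :
    (place ri ci (MatF m) : Matrix (Fin M) (Fin N) ℂ) *ᵥ unitVec N j =
      if ci ≤ j ∧ j < ci + (m - 1) then unitVec M (ri + (j - ci)) else 0 := by
  rw [mulVec_unitVec _ ⟨j, hj⟩]
  split_ifs <;> ext i <;> simp only [place, MatF, unitVec, Pi.zero_apply] <;>
    split_ifs <;> first | rfl | omega

lemma place_MatK_mulVec_unitVec (ri ci m j : ℕ) (hj : j < N) :
    (place ri ci (MatK m) : Matrix (Fin M) (Fin N) ℂ) *ᵥ unitVec N j =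
      if ci ≤ j ∧ j < ci + (m - 1) then unitVec M (ri + (j - ci) + 1) else 0 := by
  rw [mulVec_unitVec _ ⟨j, hj⟩]
  split_ifs <;> ext i <;> simp only [place, MatK, unitVec, Pi.zero_apply] <;>
    split_ifs <;> first | rfl | omega

lemma place_scalar_mulVec_unitVec (ri ci j : ℕ) (a : ℂ) (hj : j < N) :
    (place ri ci !![a] : Matrix (Fin M) (Fin N) ℂ) *ᵥ unitVec N j =
      if j = ci then a • unitVec M ri else 0 := by
  rw [mulVec_unitVec _ ⟨j, hj⟩]
  split_ifs <;> ext i <;>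
    simp only [place, unitVec, Pi.zero_apply, Pi.smul_apply, smul_eq_mul] <;>
    split_ifs <;> first | (exfalso; omega) | simp

lemma Estd_mulVec_unitVec (a b j : ℕ) (ha : 1 ≤ a) (hj : j < N) :
    (Estd a b : Matrix (Fin M) (Fin N) ℂ) *ᵥ unitVec N j =
      if j + 1 = b then unitVec M (a - 1) else 0 := by
  rw [mulVec_unitVec _ ⟨j, hj⟩]
  split_ifs <;> ext i <;> simp only [Estd, unitVec, Pi.zero_apply] <;>
    split_ifs <;> first | rfl | omega

end Place

def sourceF (r : ℕ) : Matrix (Fin (2 * r + 2)) (Fin (2 * r)) ℂ :=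
  place 0 0 (MatF r) + place r (r - 1) (MatF (r + 1)) + place (2 * r + 1) (2 * r - 1) !![(1 : ℂ)]

def sourceK (r : ℕ) (lam β γ : ℂ) : Matrix (Fin (2 * r + 2)) (Fin (2 * r)) ℂ :=
  place 0 0 (MatK r) + place r (r - 1) (MatK (r + 1)) + place (2 * r + 1) (2 * r - 1) !![lam]
    + β • Estd 1 (2 * r) + γ • Estd (r + 1) (2 * r)

def targetF (r : ℕ) : Matrix (Fin (2 * r + 2)) (Fin (2 * r)) ℂ :=
  place 0 0 (MatF (r + 1)) + place (r + 1) r (MatF (r + 1))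

def targetK (r : ℕ) : Matrix (Fin (2 * r + 2)) (Fin (2 * r)) ℂ :=
  place 0 0 (MatK (r + 1)) + place (r + 1) r (MatK (r + 1))

section Columns

variable {r j : ℕ}

lemma sourceF_mulVec_unitVec_of_lt (hj : j < r - 1) :
    sourceF r *ᵥ unitVec (2 * r) j = unitVec (2 * r + 2) j := by
  simp only [sourceF, add_mulVec, place_MatF_mulVec_unitVec _ _ _ _ (by omega : j < 2 * r),
    place_scalar_mulVec_unitVec _ _ _ _ (by omega : j < 2 * r)]
  split_ifs <;> first | (exfalso; omega) | simp

lemma sourceF_mulVec_unitVec_of_ge (h₁ : r - 1 ≤ j) (h₂ : j < 2 * r - 1) :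
    sourceF r *ᵥ unitVec (2 * r) j = unitVec (2 * r + 2) (j + 1) := by
  simp only [sourceF, add_mulVec, place_MatF_mulVec_unitVec _ _ _ _ (by omega : j < 2 * r),
    place_scalar_mulVec_unitVec _ _ _ _ (by omega : j < 2 * r)]
  split_ifs <;> first | (exfalso; omega) | (simp only [add_zero, zero_add]; congr 1; omega)

lemma sourceF_mulVec_unitVec_last (hr : 1 ≤ r) :
    sourceF r *ᵥ unitVec (2 * r) (2 * r - 1) = unitVec (2 * r + 2) (2 * r + 1) := by
  simp only [sourceF, add_mulVec,
    place_MatF_mulVec_unitVec _ _ _ _ (by omega : 2 * r - 1 < 2 * r),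
    place_scalar_mulVec_unitVec _ _ _ _ (by omega : 2 * r - 1 < 2 * r)]
  split_ifs <;> first | (exfalso; omega) | simp

variable {lam β γ : ℂ}

lemma sourceK_mulVec_unitVec_of_lt (hj : j < r - 1) :
    sourceK r lam β γ *ᵥ unitVec (2 * r) j = unitVec (2 * r + 2) (j + 1) := by
  simp only [sourceK, add_mulVec, smul_mulVec,
    place_MatK_mulVec_unitVec _ _ _ _ (by omega : j < 2 * r),
    place_scalar_mulVec_unitVec _ _ _ _ (by omega : j < 2 * r),
    Estd_mulVec_unitVec 1 _ _ le_rfl (by omega : j < 2 * r),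
    Estd_mulVec_unitVec (r + 1) _ _ (by omega) (by omega : j < 2 * r)]
  split_ifs <;> first | (exfalso; omega) | simp

lemma sourceK_mulVec_unitVec_of_ge (h₁ : r - 1 ≤ j) (h₂ : j < 2 * r - 1) :
    sourceK r lam β γ *ᵥ unitVec (2 * r) j = unitVec (2 * r + 2) (j + 2) := by
  simp only [sourceK, add_mulVec, smul_mulVec,
    place_MatK_mulVec_unitVec _ _ _ _ (by omega : j < 2 * r),
    place_scalar_mulVec_unitVec _ _ _ _ (by omega : j < 2 * r),
    Estd_mulVec_unitVec 1 _ _ le_rfl (by omega : j < 2 * r),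
    Estd_mulVec_unitVec (r + 1) _ _ (by omega) (by omega : j < 2 * r)]
  split_ifs <;>
    first | (exfalso; omega) | (simp only [add_zero, zero_add, smul_zero]; congr 1; omega)

lemma sourceK_mulVec_unitVec_last (hr : 1 ≤ r) :
    sourceK r lam β γ *ᵥ unitVec (2 * r) (2 * r - 1) =
      lam • unitVec (2 * r + 2) (2 * r + 1) + β • unitVec (2 * r + 2) 0 +
        γ • unitVec (2 * r + 2) r := by
  simp only [sourceK, add_mulVec, smul_mulVec,
    place_MatK_mulVec_unitVec _ _ _ _ (by omega : 2 * r - 1 < 2 * r),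
    place_scalar_mulVec_unitVec _ _ _ _ (by omega : 2 * r - 1 < 2 * r),
    Estd_mulVec_unitVec 1 _ _ le_rfl (by omega : 2 * r - 1 < 2 * r),
    Estd_mulVec_unitVec (r + 1) _ _ (by omega) (by omega : 2 * r - 1 < 2 * r)]
  split_ifs <;> first | (exfalso; omega) | simp

lemma targetF_mulVec_unitVec (hj : j < 2 * r) :
    targetF r *ᵥ unitVec (2 * r) j = unitVec (2 * r + 2) (if j < r then j else j + 1) := by
  simp only [targetF, add_mulVec, place_MatF_mulVec_unitVec _ _ _ _ hj]
  split_ifs <;> first | (exfalso; omega) | (simp only [add_zero, zero_add]; congr 1 <;> omega)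

lemma targetK_mulVec_unitVec (hj : j < 2 * r) :
    targetK r *ᵥ unitVec (2 * r) j = unitVec (2 * r + 2) (if j < r then j + 1 else j + 2) := by
  simp only [targetK, add_mulVec, place_MatK_mulVec_unitVec _ _ _ _ hj]
  split_ifs <;> first | (exfalso; omega) | (simp only [add_zero, zero_add]; congr 1 <;> omega)

end Columns

-- `w_k` of the header for `(n, m) = (2r+2, r)`, and `v_k` for `(n, m) = (2r, r-1)`.
def chainVec (n m : ℕ) (lam β γ : ℂ) : ℕ → Fin n → ℂ
  | 0 => unitVec n (n - 1)
  | k + 1 => lam • chainVec n m lam β γ k + β • unitVec n k + γ • unitVec n (m + k)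

section Chain

variable {r k : ℕ} {lam β γ : ℂ}

lemma sourceF_mulVec_chainVec (hk : k < r) :
    sourceF r *ᵥ chainVec (2 * r) (r - 1) lam β γ k = chainVec (2 * r + 2) r lam β γ k := by
  induction k with
  | zero => exact sourceF_mulVec_unitVec_last (by omega)
  | succ k ih =>
    rw [chainVec, chainVec, mulVec_add, mulVec_add, mulVec_smul, mulVec_smul, mulVec_smul,
      ih (by omega), sourceF_mulVec_unitVec_of_lt (by omega),
      sourceF_mulVec_unitVec_of_ge (by omega) (by omega), show r - 1 + k + 1 = r + k by omega]

lemma sourceK_mulVec_chainVec (hk : k < r) :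
    sourceK r lam β γ *ᵥ chainVec (2 * r) (r - 1) lam β γ k =
      chainVec (2 * r + 2) r lam β γ (k + 1) := by
  induction k with
  | zero =>
    rw [chainVec, sourceK_mulVec_unitVec_last (by omega)]
    simp [chainVec]
  | succ k ih =>
    rw [chainVec, chainVec, mulVec_add, mulVec_add, mulVec_smul, mulVec_smul,
      mulVec_smul, ih (by omega), sourceK_mulVec_unitVec_of_lt (by omega),
      sourceK_mulVec_unitVec_of_ge (by omega) (by omega),
      show r - 1 + k + 2 = r + (k + 1) by omega]

end Chain

def chainMatrix (n m : ℕ) (lam β γ : ℂ) : Matrix (Fin n) (Fin n) ℂ :=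
  Matrix.of fun i j => if (j : ℕ) ≤ m then chainVec n m lam β γ j i else unitVec n (j - 1) i

section ChainMatrix

variable {n m j : ℕ} {lam β γ : ℂ}

lemma chainMatrix_mulVec_unitVec (hj : j < n) :
    chainMatrix n m lam β γ *ᵥ unitVec n j =
      if j ≤ m then chainVec n m lam β γ j else unitVec n (j - 1) := by
  rw [mulVec_unitVec _ ⟨j, hj⟩]
  split_ifs <;> ext i <;> simp [chainMatrix, *]

lemma isUnit_chainMatrix (hn : n = 2 * m + 2) (hβ : β ≠ 0) :
    IsUnit (chainMatrix n m lam β γ) := by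
  apply isUnit_of_unitVec_mem_range
  set P := LinearMap.range (chainMatrix n m lam β γ).mulVecLin
  have hcol : ∀ j < n, chainMatrix n m lam β γ *ᵥ unitVec n j ∈ P :=
    fun j _ => LinearMap.mem_range_self _ _
  have hchain : ∀ k ≤ m, chainVec n m lam β γ k ∈ P := fun k hk => by
    simpa [chainMatrix_mulVec_unitVec (by omega : k < n), hk] using hcol k (by omega)
  have htail : ∀ i, m ≤ i → i < n - 1 → unitVec n i ∈ P := fun i h₁ h₂ => by
    simpa [chainMatrix_mulVec_unitVec (by omega : i + 1 < n), show ¬i + 1 ≤ m by omega]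
      using hcol (i + 1) (by omega)
  intro i hi
  rcases lt_or_ge i m with him | him
  · have hβi : β • unitVec n i =
        chainVec n m lam β γ (i + 1) - lam • chainVec n m lam β γ i - γ • unitVec n (m + i) := by
      rw [chainVec]
      abel
    rw [← Submodule.smul_mem_iff P hβ, hβi]
    exact P.sub_mem (P.sub_mem (hchain _ (by omega)) (P.smul_mem _ (hchain _ him.le)))
      (P.smul_mem _ (htail _ (by omega) (by omega)))
  · rcases lt_or_ge i (n - 1) with hin | hin
    · exact htail i him hin
    · simpa [chainVec, show i = n - 1 by omega] using hchain 0 (Nat.zero_le _)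

end ChainMatrix

section Intertwining

variable {r : ℕ} {lam β γ : ℂ}

lemma sourceF_mul_chainMatrix :
    sourceF r * chainMatrix (2 * r) (r - 1) lam β γ =
      chainMatrix (2 * r + 2) r lam β γ * targetF r := by
  refine ext_of_mulVec_single fun j => ?_
  have hj := j.isLt
  rw [← unitVec_eq_single, ← mulVec_mulVec, ← mulVec_mulVec, chainMatrix_mulVec_unitVec hj,
    targetF_mulVec_unitVec hj]
  rcases lt_or_ge (j : ℕ) r with hjr | hjr
  · rw [if_pos (by omega), if_pos hjr, chainMatrix_mulVec_unitVec (by omega), if_pos (by omega),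
      sourceF_mulVec_chainVec hjr]
  · rw [if_neg (by omega), if_neg (by omega), chainMatrix_mulVec_unitVec (by omega),
      if_neg (by omega), sourceF_mulVec_unitVec_of_ge (by omega) (by omega)]
    congr 1
    omega

lemma sourceK_mul_chainMatrix :
    sourceK r lam β γ * chainMatrix (2 * r) (r - 1) lam β γ =
      chainMatrix (2 * r + 2) r lam β γ * targetK r := by
  refine ext_of_mulVec_single fun j => ?_
  have hj := j.isLt
  rw [← unitVec_eq_single, ← mulVec_mulVec, ← mulVec_mulVec, chainMatrix_mulVec_unitVec hj,
    targetK_mulVec_unitVec hj]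
  rcases lt_or_ge (j : ℕ) r with hjr | hjr
  · rw [if_pos (by omega), if_pos hjr, chainMatrix_mulVec_unitVec (by omega), if_pos (by omega),
      sourceK_mulVec_chainVec hjr]
  · rw [if_neg (by omega), if_neg (by omega), chainMatrix_mulVec_unitVec (by omega),
      if_neg (by omega), sourceK_mulVec_unitVec_of_ge (by omega) (by omega)]
    congr 1
    omega

end Intertwining

theorem bif_tri_r_rp1_lambda_beta_ne (r : ℕ) (hr : 1 ≤ r) (lam γ : ℂ) (β : ℂ) (hβ : β ≠ 0) :
    PairEquiv
      (place 0 0 (MatF r) + place r (r - 1) (MatF (r + 1))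
          + place (2 * r + 1) (2 * r - 1) !![(1 : ℂ)] :
        Matrix (Fin (2 * r + 2)) (Fin (2 * r)) ℂ)
      (place 0 0 (MatK r) + place r (r - 1) (MatK (r + 1))
          + place (2 * r + 1) (2 * r - 1) !![lam]
          + β • Estd 1 (2 * r) + γ • Estd (r + 1) (2 * r))
      (place 0 0 (MatF (r + 1)) + place (r + 1) r (MatF (r + 1)))
      (place 0 0 (MatK (r + 1)) + place (r + 1) r (MatK (r + 1))) :=
  PairEquiv.of_mul_eq (isUnit_chainMatrix rfl hβ) (isUnit_chainMatrix (by omega) hβ)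
    sourceF_mul_chainMatrix sourceK_mul_chainMatrix

end
end

section
/- Let r ≥ 1, let λ and μ be complex numbers with λ ≠ μ, and let β and γ be nonzero complex numbers. Then the pair of (r+2)×(r+1) complex matrices (F_r ⊕ I₂, (K_r ⊕ diag(λ, μ)) + β·E_{1,r} + γ·E_{1,r+1}) is equivalent to the pair (F_{r+2}, K_{r+2}). -/
open Matrix

noncomputable section

def Mm (n : ℕ) (lam mu β γ : ℂ) : Matrix (Fin n) (Fin n) ℂ := fun i j =>
  if (i : ℕ) + 2 = n then γ * lam ^ (j : ℕ)
  else if (i : ℕ) + 1 = n then -β * mu ^ (j : ℕ)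
  else if (i : ℕ) + 1 ≤ (j : ℕ) then
    β * γ * (lam ^ ((j : ℕ) - 1 - (i : ℕ)) - mu ^ ((j : ℕ) - 1 - (i : ℕ)))
  else 0

def Nm (n : ℕ) (lam mu β γ : ℂ) : Matrix (Fin n) (Fin n) ℂ := fun i j =>
  (if (j : ℕ) + 2 = n then
      (if (i : ℕ) = 0 then β * mu else 0) + (if (i : ℕ) = 1 then -β else 0)
   else if (j : ℕ) + 1 = n then
      (if (i : ℕ) = 0 then γ * lam else 0) + (if (i : ℕ) = 1 then -γ else 0)
   else
      (if (i : ℕ) = (j : ℕ) then -(lam * mu) else 0)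
        + (if (i : ℕ) = (j : ℕ) + 1 then lam + mu else 0)
        + (if (i : ℕ) = (j : ℕ) + 2 then -1 else 0)) / (β * γ * (mu - lam))

lemma sum_ite_val {n c : ℕ} (hc : c < n) (f : Fin n → ℂ) :
    (∑ k : Fin n, if (k : ℕ) = c then f k else 0) = f ⟨c, hc⟩ := by
  rw [Fintype.sum_eq_single (⟨c, hc⟩ : Fin n)]
  · simp
  · intro k hk
    rw [if_neg (fun h => hk (Fin.ext h))]

lemma ite_div_zero (P : Prop) [Decidable P] (v D : ℂ) :
    (if P then v else 0) / D = if P then v / D else 0 := by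
  split_ifs <;> simp

lemma Mm_top {n : ℕ} (lam mu β γ : ℂ) {i : Fin n} (hi : (i : ℕ) + 2 = n) (j : Fin n) :
    Mm n lam mu β γ i j = γ * lam ^ (j : ℕ) := by simp [Mm, hi]

lemma Mm_bot {n : ℕ} (lam mu β γ : ℂ) {i : Fin n} (hi : (i : ℕ) + 1 = n) (j : Fin n) :
    Mm n lam mu β γ i j = -β * mu ^ (j : ℕ) := by
  have h2 : (i : ℕ) + 2 ≠ n := by omega
  simp [Mm, h2, hi]

lemma Mm_band {n : ℕ} (lam mu β γ : ℂ) {i : Fin n} (h2 : (i : ℕ) + 2 ≠ n)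
    (h1 : (i : ℕ) + 1 ≠ n) (j : Fin n) :
    Mm n lam mu β γ i j = if (i : ℕ) + 1 ≤ (j : ℕ) then
      β * γ * (lam ^ ((j : ℕ) - 1 - (i : ℕ)) - mu ^ ((j : ℕ) - 1 - (i : ℕ))) else 0 := by
  simp [Mm, h2, h1]

lemma Mm_band_zero {n : ℕ} (lam mu β γ : ℂ) {i j : Fin n} (h2 : (i : ℕ) + 2 ≠ n)
    (h1 : (i : ℕ) + 1 ≠ n) (hj : (j : ℕ) ≤ (i : ℕ) + 1) :
    Mm n lam mu β γ i j = 0 := by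
  rw [Mm_band lam mu β γ h2 h1]
  by_cases h : (i : ℕ) + 1 ≤ (j : ℕ)
  · rw [if_pos h, show (j : ℕ) - 1 - (i : ℕ) = 0 by omega]
    simp
  · rw [if_neg h]

lemma MN_eq_one (n : ℕ) (hn : 2 ≤ n) (lam mu β γ : ℂ) (hlm : lam ≠ mu)
    (hβ : β ≠ 0) (hγ : γ ≠ 0) :
    Mm n lam mu β γ * Nm n lam mu β γ = 1 := by
  have hD : β * γ * (mu - lam) ≠ 0 :=
    mul_ne_zero (mul_ne_zero hβ hγ) (sub_ne_zero.mpr (Ne.symm hlm))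
  ext i j
  rw [Matrix.mul_apply, Matrix.one_apply]
  by_cases hj2 : (j : ℕ) + 2 = n
  · -- column n-2
    simp_rw [Nm, if_pos hj2, add_div, ite_div_zero, mul_add, mul_ite, mul_zero]
    rw [Finset.sum_add_distrib,
      sum_ite_val (show 0 < n by omega), sum_ite_val (show 1 < n by omega)]
    by_cases hi2 : (i : ℕ) + 2 = n
    · rw [Mm_top lam mu β γ hi2, Mm_top lam mu β γ hi2]
      rw [if_pos (by apply Fin.ext; omega)]
      simp only [Fin.val_mk, pow_zero, pow_one]
      field_simp
      ring
    · by_cases hi1 : (i : ℕ) + 1 = n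
      · rw [Mm_bot lam mu β γ hi1, Mm_bot lam mu β γ hi1]
        rw [if_neg (by intro h; rw [h] at hi1; omega)]
        simp only [Fin.val_mk, pow_zero, pow_one]
        field_simp
        ring
      · rw [Mm_band_zero lam mu β γ hi2 hi1 (by simp),
          Mm_band_zero lam mu β γ hi2 hi1 (by simp),
          if_neg (show ¬ i = j by simp only [Fin.ext_iff]; omega)]
        ring
  · by_cases hj1 : (j : ℕ) + 1 = n
    · -- column n-1
      simp_rw [Nm, if_neg hj2, if_pos hj1, add_div, ite_div_zero, mul_add, mul_ite, mul_zero]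
      rw [Finset.sum_add_distrib,
        sum_ite_val (show 0 < n by omega), sum_ite_val (show 1 < n by omega)]
      by_cases hi2 : (i : ℕ) + 2 = n
      · rw [Mm_top lam mu β γ hi2, Mm_top lam mu β γ hi2]
        rw [if_neg (by intro h; rw [h] at hi2; omega)]
        simp only [Fin.val_mk, pow_zero, pow_one]
        field_simp
        ring
      · by_cases hi1 : (i : ℕ) + 1 = n
        · rw [Mm_bot lam mu β γ hi1, Mm_bot lam mu β γ hi1]
          rw [if_pos (by apply Fin.ext; omega)]
          simp only [Fin.val_mk, pow_zero, pow_one]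
          field_simp
          ring
        · rw [Mm_band_zero lam mu β γ hi2 hi1 (by simp),
            Mm_band_zero lam mu β γ hi2 hi1 (by simp),
            if_neg (show ¬ i = j by simp only [Fin.ext_iff]; omega)]
          ring
    · -- band column: j, j+1, j+2 < n
      have hj : (j : ℕ) + 2 < n := by have := j.isLt; omega
      simp_rw [Nm, if_neg hj2, if_neg hj1, add_div, ite_div_zero, mul_add, mul_ite, mul_zero]
      rw [Finset.sum_add_distrib, Finset.sum_add_distrib,
        sum_ite_val (show (j : ℕ) < n by omega),
        sum_ite_val (show (j : ℕ) + 1 < n by omega),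
        sum_ite_val (show (j : ℕ) + 2 < n by omega)]
      by_cases hi2 : (i : ℕ) + 2 = n
      · rw [Mm_top lam mu β γ hi2, Mm_top lam mu β γ hi2, Mm_top lam mu β γ hi2]
        rw [if_neg (by intro h; rw [h] at hi2; omega)]
        simp only [Fin.val_mk, pow_succ]
        field_simp
        ring
      · by_cases hi1 : (i : ℕ) + 1 = n
        · rw [Mm_bot lam mu β γ hi1, Mm_bot lam mu β γ hi1, Mm_bot lam mu β γ hi1]
          rw [if_neg (by intro h; rw [h] at hi1; omega)]
          simp only [Fin.val_mk, pow_succ]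
          field_simp
          ring
        · rw [Mm_band lam mu β γ hi2 hi1, Mm_band lam mu β γ hi2 hi1,
            Mm_band lam mu β γ hi2 hi1]
          simp only [Fin.val_mk]
          rcases Nat.lt_or_ge (i : ℕ) (j : ℕ) with hij | hij
          · -- i + 1 ≤ j : all three, sum zero
            obtain ⟨a, ha⟩ : ∃ a, (j : ℕ) = (i : ℕ) + 1 + a := ⟨(j:ℕ) - (i:ℕ) - 1, by omega⟩
            rw [if_pos (by omega), if_pos (by omega), if_pos (by omega),
              if_neg (by intro h; rw [h] at hij; omega),
              show (j : ℕ) - 1 - (i : ℕ) = a by omega,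
              show (j : ℕ) + 1 - 1 - (i : ℕ) = a + 1 by omega,
              show (j : ℕ) + 2 - 1 - (i : ℕ) = a + 2 by omega]
            simp only [pow_succ]
            field_simp
            ring
          · rcases Nat.eq_or_lt_of_le hij with hij' | hij'
            · -- i = j : diagonal, gives 1
              rw [if_neg (by omega), if_pos (by omega), if_pos (by omega),
                if_pos (Fin.ext hij'.symm),
                show (j : ℕ) + 1 - 1 - (i : ℕ) = 0 by omega,
                show (j : ℕ) + 2 - 1 - (i : ℕ) = 1 by omega]
              simp only [pow_zero, pow_one]
              field_simp
              ring
            · rcases Nat.eq_or_lt_of_le hij' with hij'' | hij''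
              · -- i = j + 1
                rw [if_neg (by omega), if_neg (by omega), if_pos (by omega),
                  if_neg (by intro h; rw [h] at hij''; omega),
                  show (j : ℕ) + 2 - 1 - (i : ℕ) = 0 by omega]
                simp
              · -- i ≥ j + 2
                rw [if_neg (by omega), if_neg (by omega), if_neg (by omega),
                  if_neg (by intro h; rw [h] at hij''; omega)]
                simp

lemma diag2_apply (lam mu : ℂ) (a b : Fin 2) :
    !![lam, 0; 0, mu] a b =
      (if (a : ℕ) = 0 ∧ (b : ℕ) = 0 then lam else 0)
        + (if (a : ℕ) = 1 ∧ (b : ℕ) = 1 then mu else 0) := by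
  fin_cases a <;> fin_cases b <;> simp

lemma A1_low {r : ℕ} (i : Fin (r + 2)) (k : Fin (r + 1)) (hi : (i : ℕ) + 1 < r) :
    (place 0 0 (MatF r) + place r (r - 1) (1 : Matrix (Fin 2) (Fin 2) ℂ) :
      Matrix (Fin (r + 2)) (Fin (r + 1)) ℂ) i k = if (k : ℕ) = (i : ℕ) then 1 else 0 := by
  simp only [Matrix.add_apply, place, MatF, Matrix.one_apply, Fin.mk.injEq]
  split_ifs <;> first | (exfalso; omega) | norm_num

lemma A1_gap {r : ℕ} (i : Fin (r + 2)) (k : Fin (r + 1)) (hi : (i : ℕ) + 1 = r) :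
    (place 0 0 (MatF r) + place r (r - 1) (1 : Matrix (Fin 2) (Fin 2) ℂ) :
      Matrix (Fin (r + 2)) (Fin (r + 1)) ℂ) i k = 0 := by
  simp only [Matrix.add_apply, place, MatF, Matrix.one_apply, Fin.mk.injEq]
  split_ifs <;> first | (exfalso; omega) | norm_num

lemma A1_r {r : ℕ} (i : Fin (r + 2)) (k : Fin (r + 1)) (hi : (i : ℕ) = r) :
    (place 0 0 (MatF r) + place r (r - 1) (1 : Matrix (Fin 2) (Fin 2) ℂ) :
      Matrix (Fin (r + 2)) (Fin (r + 1)) ℂ) i k = if (k : ℕ) = r - 1 then 1 else 0 := by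
  simp only [Matrix.add_apply, place, MatF, Matrix.one_apply, Fin.mk.injEq]
  split_ifs <;> first | (exfalso; omega) | norm_num

lemma A1_r1 {r : ℕ} (hr : 1 ≤ r) (i : Fin (r + 2)) (k : Fin (r + 1)) (hi : (i : ℕ) = r + 1) :
    (place 0 0 (MatF r) + place r (r - 1) (1 : Matrix (Fin 2) (Fin 2) ℂ) :
      Matrix (Fin (r + 2)) (Fin (r + 1)) ℂ) i k = if (k : ℕ) = r then 1 else 0 := by
  simp only [Matrix.add_apply, place, MatF, Matrix.one_apply, Fin.mk.injEq]
  split_ifs <;> first | (exfalso; omega) | norm_num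

lemma A2_0 {r : ℕ} (hr : 1 ≤ r) (lam mu β γ : ℂ) (i : Fin (r + 2)) (k : Fin (r + 1))
    (hi : (i : ℕ) = 0) :
    (place 0 0 (MatK r) + place r (r - 1) !![lam, 0; 0, mu]
        + β • Estd 1 r + γ • Estd 1 (r + 1) : Matrix (Fin (r + 2)) (Fin (r + 1)) ℂ) i k
    = (if (k : ℕ) = r - 1 then β else 0) + (if (k : ℕ) = r then γ else 0) := by
  simp only [Matrix.add_apply, Matrix.smul_apply, place, MatK, Estd, diag2_apply,
    smul_eq_mul, Fin.val_mk, mul_ite, mul_one, mul_zero]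
  split_ifs <;> first | (exfalso; omega) | norm_num

lemma A2_mid {r : ℕ} (lam mu β γ : ℂ) (i : Fin (r + 2)) (k : Fin (r + 1))
    (h0 : 1 ≤ (i : ℕ)) (hi : (i : ℕ) < r) :
    (place 0 0 (MatK r) + place r (r - 1) !![lam, 0; 0, mu]
        + β • Estd 1 r + γ • Estd 1 (r + 1) : Matrix (Fin (r + 2)) (Fin (r + 1)) ℂ) i k
    = if (k : ℕ) = (i : ℕ) - 1 then 1 else 0 := by
  simp only [Matrix.add_apply, Matrix.smul_apply, place, MatK, Estd, diag2_apply,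
    smul_eq_mul, Fin.val_mk, mul_ite, mul_one, mul_zero]
  split_ifs <;> first | (exfalso; omega) | norm_num

lemma A2_r {r : ℕ} (hr : 1 ≤ r) (lam mu β γ : ℂ) (i : Fin (r + 2)) (k : Fin (r + 1))
    (hi : (i : ℕ) = r) :
    (place 0 0 (MatK r) + place r (r - 1) !![lam, 0; 0, mu]
        + β • Estd 1 r + γ • Estd 1 (r + 1) : Matrix (Fin (r + 2)) (Fin (r + 1)) ℂ) i k
    = if (k : ℕ) = r - 1 then lam else 0 := by
  simp only [Matrix.add_apply, Matrix.smul_apply, place, MatK, Estd, diag2_apply,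
    smul_eq_mul, Fin.val_mk, mul_ite, mul_one, mul_zero]
  split_ifs <;> first | (exfalso; omega) | norm_num

lemma A2_r1 {r : ℕ} (hr : 1 ≤ r) (lam mu β γ : ℂ) (i : Fin (r + 2)) (k : Fin (r + 1))
    (hi : (i : ℕ) = r + 1) :
    (place 0 0 (MatK r) + place r (r - 1) !![lam, 0; 0, mu]
        + β • Estd 1 r + γ • Estd 1 (r + 1) : Matrix (Fin (r + 2)) (Fin (r + 1)) ℂ) i k
    = if (k : ℕ) = r then mu else 0 := by
  simp only [Matrix.add_apply, Matrix.smul_apply, place, MatK, Estd, diag2_apply,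
    smul_eq_mul, Fin.val_mk, mul_ite, mul_one, mul_zero]
  split_ifs <;> first | (exfalso; omega) | norm_num


lemma key1 (r : ℕ) (hr : 1 ≤ r) (lam mu β γ : ℂ) :
    (place 0 0 (MatF r) + place r (r - 1) (1 : Matrix (Fin 2) (Fin 2) ℂ) :
        Matrix (Fin (r + 2)) (Fin (r + 1)) ℂ) * Mm (r + 1) lam mu β γ
      = Mm (r + 2) lam mu β γ * MatF (r + 2) := by
  ext i j
  rw [Matrix.mul_apply, Matrix.mul_apply]
  have hRHS : (∑ c : Fin (r + 2), Mm (r + 2) lam mu β γ i c * MatF (r + 2) c j)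
      = Mm (r + 2) lam mu β γ i ⟨(j : ℕ), by omega⟩ := by
    simp_rw [MatF, mul_ite, mul_one, mul_zero]
    exact sum_ite_val (show (j : ℕ) < r + 2 by omega) (fun c => Mm (r + 2) lam mu β γ i c)
  rw [hRHS]
  rcases Nat.lt_or_ge ((i : ℕ) + 1) r with h1 | h1
  · simp_rw [A1_low i _ h1, ite_mul, one_mul, zero_mul]
    rw [sum_ite_val (show (i : ℕ) < r + 1 by omega) (fun k => Mm (r + 1) lam mu β γ k j)]
    simp only [Mm, Fin.val_mk]
    split_ifs <;> first | rfl | (exfalso; omega)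
  · rcases Nat.eq_or_lt_of_le h1 with h2 | h2
    · -- i = r - 1
      simp_rw [A1_gap i _ h2.symm, zero_mul, Finset.sum_const_zero]
      simp only [Mm, Fin.val_mk]
      split_ifs <;> first | rfl | (exfalso; omega) |
        (rw [show (j : ℕ) - 1 - (i : ℕ) = 0 by omega]; simp)
    · rcases Nat.eq_or_lt_of_le h2 with h3 | h3
      · -- i = r
        simp_rw [A1_r i _ (by omega : (i : ℕ) = r), ite_mul, one_mul, zero_mul]
        rw [sum_ite_val (show r - 1 < r + 1 by omega) (fun k => Mm (r + 1) lam mu β γ k j)]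
        simp only [Mm, Fin.val_mk]
        split_ifs <;> first | rfl | (exfalso; omega)
      · -- i = r + 1
        have h4 : (i : ℕ) = r + 1 := by have := i.isLt; omega
        simp_rw [A1_r1 hr i _ h4, ite_mul, one_mul, zero_mul]
        rw [sum_ite_val (show r < r + 1 by omega) (fun k => Mm (r + 1) lam mu β γ k j)]
        simp only [Mm, Fin.val_mk]
        split_ifs <;> first | rfl | (exfalso; omega)

lemma key2 (r : ℕ) (hr : 1 ≤ r) (lam mu β γ : ℂ) :
    (place 0 0 (MatK r) + place r (r - 1) !![lam, 0; 0, mu]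
        + β • Estd 1 r + γ • Estd 1 (r + 1) : Matrix (Fin (r + 2)) (Fin (r + 1)) ℂ)
        * Mm (r + 1) lam mu β γ
      = Mm (r + 2) lam mu β γ * MatK (r + 2) := by
  ext i j
  rw [Matrix.mul_apply, Matrix.mul_apply]
  have hRHS : (∑ c : Fin (r + 2), Mm (r + 2) lam mu β γ i c * MatK (r + 2) c j)
      = Mm (r + 2) lam mu β γ i ⟨(j : ℕ) + 1, by omega⟩ := by
    simp_rw [MatK, mul_ite, mul_one, mul_zero]
    exact sum_ite_val (show (j : ℕ) + 1 < r + 2 by omega)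
      (fun c => Mm (r + 2) lam mu β γ i c)
  rw [hRHS]
  by_cases h0 : (i : ℕ) = 0
  · simp_rw [A2_0 hr lam mu β γ i _ h0, add_mul, ite_mul, zero_mul]
    rw [Finset.sum_add_distrib,
      sum_ite_val (show r - 1 < r + 1 by omega) (fun k => β * Mm (r + 1) lam mu β γ k j),
      sum_ite_val (show r < r + 1 by omega) (fun k => γ * Mm (r + 1) lam mu β γ k j)]
    simp only [Mm, Fin.val_mk]
    split_ifs <;> first | rfl | (exfalso; omega) |
      (rw [show (j : ℕ) + 1 - 1 - (i : ℕ) = (j : ℕ) by omega]; ring)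
  · rcases Nat.lt_or_ge (i : ℕ) r with h1 | h1
    · simp_rw [A2_mid lam mu β γ i _ (by omega) h1, ite_mul, one_mul, zero_mul]
      rw [sum_ite_val (show (i : ℕ) - 1 < r + 1 by omega)
        (fun k => Mm (r + 1) lam mu β γ k j)]
      simp only [Mm, Fin.val_mk]
      split_ifs <;> first | rfl | (exfalso; omega) |
        (rw [show (j : ℕ) - 1 - ((i : ℕ) - 1) = (j : ℕ) + 1 - 1 - (i : ℕ) by omega])
    · rcases Nat.eq_or_lt_of_le h1 with h2 | h2
      · simp_rw [A2_r hr lam mu β γ i _ h2.symm, ite_mul, zero_mul]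
        rw [sum_ite_val (show r - 1 < r + 1 by omega)
          (fun k => lam * Mm (r + 1) lam mu β γ k j)]
        simp only [Mm, Fin.val_mk]
        split_ifs <;> first | rfl | (exfalso; omega) | (rw [pow_succ]; ring)
      · have h3 : (i : ℕ) = r + 1 := by have := i.isLt; omega
        simp_rw [A2_r1 hr lam mu β γ i _ h3, ite_mul, zero_mul]
        rw [sum_ite_val (show r < r + 1 by omega)
          (fun k => mu * Mm (r + 1) lam mu β γ k j)]
        simp only [Mm, Fin.val_mk]
        split_ifs <;> first | rfl | (exfalso; omega) | (rw [pow_succ]; ring)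

theorem bif_tri_r_lambda_mu_both (r : ℕ) (hr : 1 ≤ r) (lam mu : ℂ) (hlm : lam ≠ mu)
    (β γ : ℂ) (hβ : β ≠ 0) (hγ : γ ≠ 0) :
    PairEquiv
      (place 0 0 (MatF r) + place r (r - 1) (1 : Matrix (Fin 2) (Fin 2) ℂ) :
        Matrix (Fin (r + 2)) (Fin (r + 1)) ℂ)
      (place 0 0 (MatK r) + place r (r - 1) !![lam, 0; 0, mu]
          + β • Estd 1 r + γ • Estd 1 (r + 1))
      (MatF (r + 2))
      (MatK (r + 2)) := by
  have hMN1 : Mm (r + 1) lam mu β γ * Nm (r + 1) lam mu β γ = 1 :=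
    MN_eq_one (r + 1) (by omega) lam mu β γ hlm hβ hγ
  have hMN2 : Mm (r + 2) lam mu β γ * Nm (r + 2) lam mu β γ = 1 :=
    MN_eq_one (r + 2) (by omega) lam mu β γ hlm hβ hγ
  have hNM2 : Nm (r + 2) lam mu β γ * Mm (r + 2) lam mu β γ = 1 :=
    mul_eq_one_comm.mp hMN2
  have hNM1 : Nm (r + 1) lam mu β γ * Mm (r + 1) lam mu β γ = 1 :=
    mul_eq_one_comm.mp hMN1
  refine ⟨Nm (r + 2) lam mu β γ, Mm (r + 1) lam mu β γ,
    ⟨⟨Nm (r + 2) lam mu β γ, Mm (r + 2) lam mu β γ, hNM2, hMN2⟩, rfl⟩,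
    ⟨⟨Mm (r + 1) lam mu β γ, Nm (r + 1) lam mu β γ, hMN1, hNM1⟩, rfl⟩, ?_, ?_⟩
  · rw [Matrix.mul_assoc, key1 r hr lam mu β γ, ← Matrix.mul_assoc, hNM2, Matrix.one_mul]
  · rw [Matrix.mul_assoc, key2 r hr lam mu β γ, ← Matrix.mul_assoc, hNM2, Matrix.one_mul]
end
end
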